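/- arXiv:2305.08858 — 2 statements merged into one kernel-verified Lean document; each statement's English description precedes it below -/
import Mathlib

section
/- A proper graded submodule U of M is graded weakly J_gr-semiprime if and only if for every homogeneous r ∈ h(R) and n ∈ ℤ⁺, either (U :_M ⟨rⁿ⟩) ⊆ (0 :_M ⟨rⁿ⟩) or (U :_M ⟨rⁿ⟩) ⊆ (U + J_gr(M) :_M ⟨r⟩). -/
open Pointwise

/-- A submodule is graded if it is generated by its homogeneous elements. -/
def IsGradedSub {Γ R M σ : Type*} [CommRing R] [AddCommGroup M] [Module R M]
    [SetLike σ M] (ℳ : Γ → σ) (U : Submodule R M) : Prop :=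
  U = Submodule.span R {m | m ∈ U ∧ SetLike.IsHomogeneousElem ℳ m}

/-- A graded maximal submodule. -/
def IsGrMaximal {Γ R M σ : Type*} [CommRing R] [AddCommGroup M] [Module R M]
    [SetLike σ M] (ℳ : Γ → σ) (B : Submodule R M) : Prop :=
  IsGradedSub ℳ B ∧ B ≠ ⊤ ∧
    ∀ L : Submodule R M, IsGradedSub ℳ L → B ≤ L → L = B ∨ L = ⊤

/-- The graded Jacobson radical: the intersection of all graded maximal submodules
(the whole module if there are none). -/
def Jgr {Γ R M σ : Type*} [CommRing R] [AddCommGroup M] [Module R M]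
    [SetLike σ M] (ℳ : Γ → σ) : Submodule R M :=
  sInf {B | IsGrMaximal ℳ B}

/-- Graded weakly semiprime submodule. -/
def IsGrWSemiprime {Γ R M σR σM : Type*} [CommRing R] [AddCommGroup M] [Module R M]
    [SetLike σR R] [SetLike σM M] (𝒜 : Γ → σR) (ℳ : Γ → σM) (U : Submodule R M) : Prop :=
  IsGradedSub ℳ U ∧ U ≠ ⊤ ∧
    ∀ (r : R) (m : M) (n : ℕ), 0 < n → SetLike.IsHomogeneousElem 𝒜 r →
      SetLike.IsHomogeneousElem ℳ m → r ^ n • m ≠ 0 → r ^ n • m ∈ U → r • m ∈ U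

/-- Graded weakly `J_gr`-semiprime submodule. -/
def IsGrWJgrSemiprime {Γ R M σR σM : Type*} [CommRing R] [AddCommGroup M] [Module R M]
    [SetLike σR R] [SetLike σM M] (𝒜 : Γ → σR) (ℳ : Γ → σM) (U : Submodule R M) : Prop :=
  IsGradedSub ℳ U ∧ U ≠ ⊤ ∧
    ∀ (r : R) (m : M) (n : ℕ), 0 < n → SetLike.IsHomogeneousElem 𝒜 r →
      SetLike.IsHomogeneousElem ℳ m → r ^ n • m ≠ 0 → r ^ n • m ∈ U → r • m ∈ U ⊔ Jgr ℳ

/-- The residual submodule `(U :_M L) = {m : M | L • m ⊆ U}`. -/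
def mcolon {R M : Type*} [CommRing R] [AddCommGroup M] [Module R M]
    (U : Submodule R M) (L : Ideal R) : Submodule R M where
  carrier := {m | ∀ x ∈ L, x • m ∈ U}
  add_mem' := by
    intro a b ha hb x hx
    simpa [smul_add] using U.add_mem (ha x hx) (hb x hx)
  zero_mem' := by intro x hx; simp
  smul_mem' := by
    intro c m hm x hx
    rw [smul_comm]
    exact U.smul_mem c (hm x hx)

variable {Γ : Type*} [AddGroup Γ] [DecidableEq Γ]
  {R : Type*} [CommRing R] (𝒜 : Γ → AddSubgroup R) [GradedRing 𝒜]
  {M : Type*} [AddCommGroup M] [Module R M]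
  (ℳ : Γ → AddSubgroup M) [SetLike.GradedSMul 𝒜 ℳ] [DirectSum.Decomposition ℳ]

/-!
For the forward direction, write `m` as the sum of its homogeneous components `mᵧ`. Since `U` is
graded, each `rⁿ • mᵧ` is a homogeneous component of `rⁿ • m ∈ U`, hence lies in `U`. If it is
nonzero, the hypothesis gives `r • mᵧ ∈ U + J_gr(M)`; if it is zero, then `r • mᵧ` lies in every
graded maximal submodule `B`: otherwise `B + R(r • mᵧ) = M`, so `mᵧ - (s * r) • mᵧ ∈ B` for some
`s`, and multiplying by `∑ᵢ<ₙ (s * r)ⁱ` gives `mᵧ - sⁿ • rⁿ • mᵧ = mᵧ ∈ B`. Hence the second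
alternative always holds. The converse is immediate from `(U :_M ⟨a⟩) = {m | a • m ∈ U}`.
-/

open DirectSum SetLike

theorem Submodule.mem_of_sub_smul_mem_of_pow_smul_eq_zero {R M : Type*} [Ring R]
    [AddCommGroup M] [Module R M] {B : Submodule R M} {a : R} {m : M} {n : ℕ}
    (hB : m - a • m ∈ B) (ha : a ^ n • m = 0) : m ∈ B := by
  have : (∑ i ∈ Finset.range n, a ^ i) • (m - a • m) = m := by
    rw [show m - a • m = (1 - a) • m by rw [sub_smul, one_smul], smul_smul, geom_sum_mul_neg,
      sub_smul, one_smul, ha, sub_zero]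
  exact this ▸ B.smul_mem _ hB

theorem mem_mcolon_span_singleton {R M : Type*} [CommRing R] [AddCommGroup M] [Module R M]
    {U : Submodule R M} {a : R} {m : M} : m ∈ mcolon U (Ideal.span {a}) ↔ a • m ∈ U := by
  refine ⟨fun h => h a (Ideal.mem_span_singleton_self a), fun h x hx => ?_⟩
  obtain ⟨c, rfl⟩ := Ideal.mem_span_singleton'.1 hx
  rw [mul_smul]
  exact U.smul_mem c h

section Decomposition

variable {ι R M σR σM : Type*} [DecidableEq ι] [Semiring R] [AddCommMonoid M] [Module R M]
  [SetLike σM M] [AddSubmonoidClass σM M] (ℳ : ι → σM) [Decomposition ℳ]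

theorem SetLike.IsHomogeneousElem.coe_decompose_mem {P : Type*} [SetLike P M] [ZeroMemClass P M]
    {p : P} {x : M} (hx : IsHomogeneousElem ℳ x) (hxp : x ∈ p) (i : ι) :
    (decompose ℳ x i : M) ∈ p := by
  obtain ⟨j, hj⟩ := hx
  by_cases hji : j = i
  · subst hji
    rwa [decompose_of_mem_same ℳ hj]
  · rw [decompose_of_mem_ne ℳ hj hji]
    exact zero_mem p

theorem coe_decompose_smul_add_of_mem [AddLeftCancelMonoid ι] [SetLike σR R] (𝒜 : ι → σR)
    [GradedSMul 𝒜 ℳ] {a : R} {g : ι} (ha : a ∈ 𝒜 g) (x : M) (i : ι) :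
    (decompose ℳ (a • x) (g + i) : M) = a • (decompose ℳ x i : M) := by
  induction x using Decomposition.inductionOn ℳ with
  | zero => simp
  | @homogeneous j m =>
    have ham : a • (m : M) ∈ ℳ (g + j) := GradedSMul.smul_mem ha m.2
    by_cases hji : j = i
    · subst hji
      rw [decompose_of_mem_same ℳ ham, decompose_of_mem_same ℳ m.2]
    · rw [decompose_of_mem_ne ℳ ham (fun h => hji (add_left_cancel h)),
        decompose_of_mem_ne ℳ m.2 hji, smul_zero]
  | add x y hx hy =>
    simp only [smul_add, decompose_add, DirectSum.add_apply, AddMemClass.coe_add, hx, hy]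

end Decomposition

section IsGradedSub

variable {ι R M σ : Type*} [CommRing R] [AddCommGroup M] [Module R M] [SetLike σ M] (ℳ : ι → σ)

theorem isGradedSub_iff_le_span {U : Submodule R M} :
    IsGradedSub ℳ U ↔ U ≤ Submodule.span R {m | m ∈ U ∧ IsHomogeneousElem ℳ m} :=
  ⟨Eq.le, fun h => h.antisymm (Submodule.span_le.2 fun _ hm => hm.1)⟩

theorem IsGradedSub.sup {U V : Submodule R M} (hU : IsGradedSub ℳ U) (hV : IsGradedSub ℳ V) :
    IsGradedSub ℳ (U ⊔ V) :=
  (isGradedSub_iff_le_span ℳ).2 <| sup_le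
    (hU.le.trans <| Submodule.span_mono fun _ hm => ⟨Submodule.mem_sup_left hm.1, hm.2⟩)
    (hV.le.trans <| Submodule.span_mono fun _ hm => ⟨Submodule.mem_sup_right hm.1, hm.2⟩)

theorem isGradedSub_span_singleton {x : M} (hx : IsHomogeneousElem ℳ x) :
    IsGradedSub ℳ (Submodule.span R {x}) :=
  (isGradedSub_iff_le_span ℳ).2 <| Submodule.span_le.2 <| Set.singleton_subset_iff.2 <|
    Submodule.subset_span ⟨Submodule.mem_span_singleton_self x, hx⟩

theorem IsGrMaximal.smul_mem_of_pow_smul_eq_zero {B : Submodule R M} (hB : IsGrMaximal ℳ B)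
    {r : R} {m : M} (hrm : IsHomogeneousElem ℳ (r • m)) {n : ℕ} (h0 : r ^ n • m = 0) :
    r • m ∈ B := by
  obtain ⟨hBgr, -, hBmax⟩ := hB
  by_contra hrmB
  have htop : B ⊔ Submodule.span R {r • m} = ⊤ :=
    (hBmax _ (hBgr.sup ℳ (isGradedSub_span_singleton ℳ hrm)) le_sup_left).resolve_left
      fun h => hrmB (h ▸ Submodule.mem_sup_right (Submodule.mem_span_singleton_self _))
  obtain ⟨b, hb, _, hs, hbs⟩ :=
    Submodule.mem_sup.1 (htop ▸ Submodule.mem_top : m ∈ B ⊔ Submodule.span R {r • m})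
  obtain ⟨s, rfl⟩ := Submodule.mem_span_singleton.1 hs
  have hsr : m - (s * r) • m ∈ B := by
    rwa [mul_smul, ← eq_sub_of_add_eq hbs]
  have hpow : (s * r) ^ n • m = 0 := by rw [mul_pow, mul_smul, h0, smul_zero]
  exact hrmB (B.smul_mem r (B.mem_of_sub_smul_mem_of_pow_smul_eq_zero hsr hpow))

theorem smul_mem_Jgr_of_pow_smul_eq_zero {r : R} {m : M} (hrm : IsHomogeneousElem ℳ (r • m))
    {n : ℕ} (h0 : r ^ n • m = 0) : r • m ∈ (Jgr ℳ : Submodule R M) :=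
  Submodule.mem_sInf.2 fun _ hB => IsGrMaximal.smul_mem_of_pow_smul_eq_zero ℳ hB hrm h0

end IsGradedSub

theorem IsGradedSub.isHomogeneous {ι R M σR σM : Type*} [AddGroup ι] [DecidableEq ι]
    [CommRing R] [AddCommGroup M] [Module R M] [SetLike σR R] [AddSubmonoidClass σR R]
    (𝒜 : ι → σR) [GradedRing 𝒜] [SetLike σM M] [AddSubmonoidClass σM M] {ℳ : ι → σM}
    [Decomposition ℳ] [GradedSMul 𝒜 ℳ] {U : Submodule R M} (hU : IsGradedSub ℳ U) :
    U.IsHomogeneous ℳ := by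
  suffices ∀ x ∈ Submodule.span R {m | m ∈ U ∧ IsHomogeneousElem ℳ m}, ∀ δ,
      (decompose ℳ x δ : M) ∈ U from fun δ x hx => this x (hU.le hx) δ
  intro x hx
  induction hx using Submodule.span_induction with
  | mem y hy => exact hy.2.coe_decompose_mem ℳ hy.1
  | zero => simp
  | add y z _ _ hy hz =>
    intro δ
    rw [decompose_add, DirectSum.add_apply, AddMemClass.coe_add]
    exact U.add_mem (hy δ) (hz δ)
  | smul a y _ hy =>
    classical
    intro δ
    rw [← sum_support_decompose 𝒜 a, Finset.sum_smul, decompose_sum, DFinsupp.finsetSum_apply,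
      AddSubmonoidClass.coe_finsetSum]
    refine U.sum_mem fun g _ => ?_
    rw [← add_neg_cancel_left g δ, coe_decompose_smul_add_of_mem ℳ 𝒜 (decompose 𝒜 a g).2]
    exact U.smul_mem _ (hy _)

theorem IsGrWJgrSemiprime.smul_mem_sup_Jgr {ι R M σR σM : Type*} [AddGroup ι] [DecidableEq ι]
    [CommRing R] [AddCommGroup M] [Module R M] [SetLike σR R] [AddSubmonoidClass σR R]
    {𝒜 : ι → σR} [GradedRing 𝒜] [SetLike σM M] [AddSubmonoidClass σM M] {ℳ : ι → σM}
    [Decomposition ℳ] [GradedSMul 𝒜 ℳ] {U : Submodule R M} (hU : IsGrWJgrSemiprime 𝒜 ℳ U)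
    {r : R} (hr : IsHomogeneousElem 𝒜 r) {n : ℕ} (hn : 0 < n) {m : M} (hm : r ^ n • m ∈ U) :
    r • m ∈ U ⊔ Jgr ℳ := by
  classical
  obtain ⟨hUgr, -, hsemi⟩ := hU
  obtain ⟨g, hg⟩ := hr
  rw [← sum_support_decompose ℳ m, Finset.smul_sum]
  refine Submodule.sum_mem _ fun γ _ => ?_
  have hmγ : IsHomogeneousElem ℳ (decompose ℳ m γ : M) := ⟨γ, (decompose ℳ m γ).2⟩
  have hmγU : r ^ n • (decompose ℳ m γ : M) ∈ U := by
    rw [← coe_decompose_smul_add_of_mem ℳ 𝒜 (pow_mem_graded n hg)]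
    exact hUgr.isHomogeneous 𝒜 _ hm
  by_cases h0 : r ^ n • (decompose ℳ m γ : M) = 0
  · exact Submodule.mem_sup_right
      (smul_mem_Jgr_of_pow_smul_eq_zero ℳ (IsHomogeneousElem.graded_smul ⟨g, hg⟩ hmγ) h0)
  · exact hsemi r _ n hn ⟨g, hg⟩ hmγ h0 hmγU

theorem stmt3 (U : Submodule R M) (hU : IsGradedSub ℳ U) (hprop : U ≠ ⊤) :
    IsGrWJgrSemiprime 𝒜 ℳ U ↔
      ∀ r : R, SetLike.IsHomogeneousElem 𝒜 r → ∀ n : ℕ, 0 < n →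
        mcolon U (Ideal.span {r ^ n}) ≤ mcolon ⊥ (Ideal.span {r ^ n}) ∨
          mcolon U (Ideal.span {r ^ n}) ≤ mcolon (U ⊔ Jgr ℳ) (Ideal.span {r}) := by
  constructor
  · intro hsemi r hr n hn
    exact Or.inr fun m hm => mem_mcolon_span_singleton.2
      (hsemi.smul_mem_sup_Jgr hr hn (mem_mcolon_span_singleton.1 hm))
  · intro h
    refine ⟨hU, hprop, fun r m n hn hr _ hne hmem => ?_⟩
    have hm : m ∈ mcolon U (Ideal.span {r ^ n}) := mem_mcolon_span_singleton.2 hmem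
    rcases h r hr n hn with hzero | hJ
    · exact absurd (mem_mcolon_span_singleton.1 (hzero hm)) hne
    · exact mem_mcolon_span_singleton.1 (hJ hm)
end

section
/- Let M be a graded finitely generated graded multiplication R-module and L a graded weakly J_gr-semiprime ideal of R with ann_R(M) ⊆ L. Then LM is a graded weakly J_gr-semiprime submodule of M. -/
open Pointwise

/-! Write `R m = K M` with `K` graded. For homogeneous `b ∈ K` we have `r ^ n b M ⊆ r ^ n R m ⊆ L M`,
and cancellation in a finitely generated graded multiplication module gives `r ^ n b ∈ L`. As `L`
is graded weakly `J_gr`-semiprime, `r b ∈ L + J_gr(R)`; in the excluded case `r ^ n b = 0` this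
holds anyway, since `r b` is then a homogeneous nilpotent. Hence
`r m ∈ (L + J_gr(R)) M ⊆ L M + J_gr(M)`, the last step by Nakayama's lemma. -/

open DirectSum SetLike

section Ungraded

variable {R M : Type*} [CommRing R] [AddCommGroup M] [Module R M]

theorem smul_top_ne_top_of_annihilator_le (hM : (⊤ : Submodule R M).FG) {I : Ideal R}
    (hann : (⊤ : Submodule R M).annihilator ≤ I) (hI : I ≠ ⊤) :
    I • (⊤ : Submodule R M) ≠ ⊤ := by
  intro h
  obtain ⟨t, ht1, ht0⟩ :=
    Submodule.exists_sub_one_mem_and_smul_eq_zero_of_fg_of_le_smul I ⊤ hM h.ge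
  have ht : t ∈ I := hann (Submodule.mem_annihilator.2 ht0)
  exact hI ((Ideal.eq_top_iff_one I).2 (by simpa using I.sub_mem ht ht1))

theorem mul_self_mul_mem_of_smul_le_span_singleton {L : Ideal R}
    (hann : (⊤ : Submodule R M).annihilator ≤ L) {a j : R} {z : M}
    (ha : ∀ x : M, a • x ∈ L • (⊤ : Submodule R M)) (hj : ∀ x : M, j • x ∈ R ∙ z) :
    j * j * a ∈ L := by
  have hjaz : j • a • z ∈ L • (R ∙ z) := by
    refine Submodule.smul_induction_on (p := fun y => j • y ∈ L • (R ∙ z)) (ha z)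
      (fun l hl x _ => ?_) (fun x y hx hy => ?_)
    · rw [smul_comm]
      exact Submodule.smul_mem_smul hl (hj x)
    · rw [smul_add]
      exact add_mem hx hy
  obtain ⟨l, hl, hlz⟩ := Submodule.mem_smul_span_singleton.1 hjaz
  have hann' : (j * a - l) * j ∈ (⊤ : Submodule R M).annihilator := by
    refine Submodule.mem_annihilator.2 fun x _ => ?_
    obtain ⟨c, hc⟩ := Submodule.mem_span_singleton.1 (hj x)
    rw [mul_smul, ← hc, smul_comm, sub_smul, mul_smul, hlz, sub_self, smul_zero]
  have := L.add_mem (hann hann') (L.mul_mem_left j hl)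
  rwa [show (j * a - l) * j + j * l = j * j * a by ring] at this

theorem smul_mem_smul_top_of_le_colon {I K : Ideal R} {r : R} {m : M}
    (hm : m ∈ K • (⊤ : Submodule R M)) (hK : K ≤ I.colon {r}) :
    r • m ∈ I • (⊤ : Submodule R M) := by
  have hrm := Submodule.smul_mem_smul (Ideal.mem_span_singleton_self r) hm
  rw [← Submodule.mul_smul] at hrm
  refine Submodule.smul_mono_left (Ideal.span_singleton_mul_le_iff.2 fun b hb => ?_) hrm
  simpa [mul_comm] using Submodule.mem_colon_singleton.1 (hK hb)

end Ungraded

section Decomposition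

variable {Γ R M : Type*} [DecidableEq Γ] [CommRing R] [AddCommGroup M] [Module R M]
  (ℳ : Γ → AddSubgroup M) [Decomposition ℳ]

theorem Submodule.IsHomogeneous.sup {p q : Submodule R M} (hp : p.IsHomogeneous ℳ)
    (hq : q.IsHomogeneous ℳ) : (p ⊔ q).IsHomogeneous ℳ := by
  intro i x hx
  obtain ⟨y, hy, z, hz, rfl⟩ := Submodule.mem_sup.1 hx
  rw [decompose_add, DirectSum.add_apply, AddSubgroup.coe_add]
  exact add_mem (Submodule.mem_sup_left (hp i hy)) (Submodule.mem_sup_right (hq i hz))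

theorem Submodule.exists_isHomogeneousElem_notMem {U : Submodule R M} (hU : U ≠ ⊤) :
    ∃ x, IsHomogeneousElem ℳ x ∧ x ∉ U := by
  by_contra! h
  refine hU (eq_top_iff.2 fun x _ => ?_)
  classical
  rw [← sum_support_decompose ℳ x]
  exact sum_mem fun i _ => h _ ⟨i, (decompose ℳ x i).2⟩

end Decomposition

section Graded

variable {Γ R M : Type*} [AddGroup Γ] [DecidableEq Γ] [CommRing R] [AddCommGroup M] [Module R M]
  (𝒜 : Γ → AddSubgroup R) [GradedRing 𝒜]
  (ℳ : Γ → AddSubgroup M) [Decomposition ℳ] [GradedSMul 𝒜 ℳ]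

def IsGrMultiplication : Prop :=
  ∀ V : Submodule R M, IsGradedSub ℳ V →
    ∃ K : Ideal R, IsGradedSub 𝒜 K ∧ V = K • (⊤ : Submodule R M)

theorem coe_decompose_smul_of_mem {e : Γ} {x : M} (hx : x ∈ ℳ e) (c : R) (i : Γ) :
    (decompose ℳ (c • x) i : M) = (decompose 𝒜 c (i - e) : R) • x := by
  induction c using Decomposition.inductionOn 𝒜 with
  | zero => simp
  | @homogeneous d c =>
    rw [decompose_of_mem ℳ (GradedSMul.smul_mem c.2 hx), decompose_coe, coe_of_apply,
      coe_of_apply]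
    by_cases h : d + e = i
    · simp [eq_sub_of_add_eq h]
    · have h' : d ≠ i - e := fun h' => h (eq_sub_iff_add_eq.1 h')
      simp [h, h']
  | add c c' hc hc' => simp [add_smul, hc, hc']

include 𝒜 in
theorem Submodule.isHomogeneous_span {s : Set M} (hs : ∀ x ∈ s, IsHomogeneousElem ℳ x) :
    (Submodule.span R s).IsHomogeneous ℳ := by
  intro i y hy
  induction hy using Submodule.span_induction generalizing i with
  | mem x hx =>
    obtain ⟨e, he⟩ := hs x hx
    rw [decompose_of_mem ℳ he, coe_of_apply]
    split_ifs
    · exact Submodule.subset_span hx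
    · exact zero_mem _
  | zero => simp
  | add y z _ _ hy hz =>
    rw [decompose_add, DirectSum.add_apply, AddSubgroup.coe_add]
    exact add_mem (hy i) (hz i)
  | smul a y _ hy =>
    classical
    rw [← sum_support_decompose ℳ y, Finset.smul_sum, decompose_sum,
      DFinsupp.finsetSum_apply, AddSubmonoidClass.coe_finsetSum]
    refine sum_mem fun e _ => ?_
    rw [coe_decompose_smul_of_mem 𝒜 ℳ (decompose ℳ y e).2]
    exact Submodule.smul_mem _ _ (hy e)

include 𝒜 in
theorem isGradedSub_iff_isHomogeneous {U : Submodule R M} :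
    IsGradedSub ℳ U ↔ U.IsHomogeneous ℳ := by
  refine ⟨fun h => ?_, fun h => ?_⟩
  · rw [h]
    exact Submodule.isHomogeneous_span 𝒜 ℳ fun x hx => hx.2
  · refine le_antisymm (fun x hx => ?_) (Submodule.span_le.2 fun x hx => hx.1)
    classical
    rw [← sum_support_decompose ℳ x]
    exact sum_mem fun i _ => Submodule.subset_span ⟨h i hx, i, (decompose ℳ x i).2⟩

include 𝒜 in
theorem isGradedSub_span_singleton_s16 {m : M} (hm : IsHomogeneousElem ℳ m) :
    IsGradedSub ℳ (R ∙ m) :=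
  (isGradedSub_iff_isHomogeneous 𝒜 ℳ).2 (Submodule.isHomogeneous_span 𝒜 ℳ (by simpa using hm))

theorem Submodule.IsHomogeneous.smul {I : Ideal R} {N : Submodule R M}
    (hI : I.IsHomogeneous 𝒜) (hN : N.IsHomogeneous ℳ) : (I • N).IsHomogeneous ℳ := by
  rw [(isGradedSub_iff_isHomogeneous 𝒜 𝒜).2 hI, (isGradedSub_iff_isHomogeneous 𝒜 ℳ).2 hN,
    ← Ideal.span, Submodule.span_smul_span]
  refine Submodule.isHomogeneous_span 𝒜 ℳ ?_
  rintro _ ⟨a, ⟨-, i, ha⟩, x, ⟨-, e, hx⟩, rfl⟩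
  exact ⟨i + e, GradedSMul.smul_mem ha hx⟩

theorem Submodule.IsHomogeneous.colon {N : Submodule R M} (hN : N.IsHomogeneous ℳ) {s : Set M}
    (hs : ∀ x ∈ s, IsHomogeneousElem ℳ x) : (N.colon s).IsHomogeneous 𝒜 := by
  intro i c hc
  refine Submodule.mem_colon.2 fun x hx => ?_
  obtain ⟨e, he⟩ := hs x hx
  have h := coe_decompose_smul_of_mem 𝒜 ℳ he c (i + e)
  rw [add_sub_cancel_right] at h
  exact h ▸ hN _ (Submodule.mem_colon.1 hc x hx)

theorem exists_le_isGrMaximal {P : Ideal R} (hP : P.IsHomogeneous 𝒜) (hP' : P ≠ ⊤) :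
    ∃ Q : Ideal R, IsGrMaximal 𝒜 Q ∧ P ≤ Q := by
  set S := {Q : Ideal R | Q.IsHomogeneous 𝒜 ∧ Q ≠ ⊤}
  have hchains : ∀ c ⊆ S, IsChain (· ≤ ·) c → ∀ Q ∈ c, ∃ ub ∈ S, ∀ I ∈ c, I ≤ ub := by
    intro c hc hchain Q hQ
    refine ⟨sSup c, ⟨Ideal.IsHomogeneous.sSup fun I hI => (hc hI).1, fun htop => ?_⟩,
      fun I => le_sSup⟩
    obtain ⟨I, hI, h1⟩ := (Submodule.mem_sSup_of_directed ⟨Q, hQ⟩ hchain.directedOn).1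
      (htop ▸ Submodule.mem_top : (1 : R) ∈ sSup c)
    exact (hc hI).2 ((Ideal.eq_top_iff_one I).2 h1)
  obtain ⟨Q, hPQ, hmax⟩ := zorn_le_nonempty₀ S hchains P ⟨hP, hP'⟩
  refine ⟨Q, ⟨(isGradedSub_iff_isHomogeneous 𝒜 𝒜).2 hmax.1.1, hmax.1.2, fun K hK hQK => ?_⟩, hPQ⟩
  by_cases hKtop : K = ⊤
  · exact Or.inr hKtop
  · exact Or.inl (hmax.eq_of_ge ⟨(isGradedSub_iff_isHomogeneous 𝒜 𝒜).1 hK, hKtop⟩ hQK)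

theorem IsGrMaximal.exists_add_eq_one {Q K : Ideal R} (hQ : IsGrMaximal 𝒜 Q)
    (hK : K.IsHomogeneous 𝒜) (hKQ : ¬K ≤ Q) : ∃ q ∈ Q, ∃ k ∈ K, q + k = 1 := by
  have hsup : IsGradedSub 𝒜 (Q ⊔ K) := (isGradedSub_iff_isHomogeneous 𝒜 𝒜).2
    (((isGradedSub_iff_isHomogeneous 𝒜 𝒜).1 hQ.1).sup 𝒜 hK)
  rcases hQ.2.2 _ hsup le_sup_left with h | h
  · exact absurd (h ▸ le_sup_right) hKQ
  · exact Submodule.mem_sup.1 (h ▸ Submodule.mem_top)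

theorem isHomogeneous_Jgr : (Jgr (R := R) 𝒜).IsHomogeneous 𝒜 :=
  Ideal.IsHomogeneous.sInf fun _ hQ => (isGradedSub_iff_isHomogeneous 𝒜 𝒜).1 hQ.1

theorem IsNilpotent.mem_Jgr {x : R} (hnil : IsNilpotent x) (hx : IsHomogeneousElem 𝒜 x) :
    x ∈ Jgr (R := R) 𝒜 := by
  refine Submodule.mem_sInf.2 fun Q hQ => ?_
  by_contra hxQ
  obtain ⟨q, hq, y, hy, hqy⟩ := hQ.exists_add_eq_one 𝒜
    (Ideal.homogeneous_span 𝒜 _ (by simpa using hx))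
    fun h => hxQ (h (Ideal.mem_span_singleton_self x))
  obtain ⟨c, rfl⟩ := Ideal.mem_span_singleton'.1 hy
  have hunit : IsUnit q := by
    rw [eq_sub_of_add_eq hqy]
    exact ((Commute.all c x).isNilpotent_mul_left hnil).isUnit_one_sub
  exact hQ.2.1 (Ideal.eq_top_of_isUnit_mem _ hq hunit)

theorem Jgr_smul_top_le (hM : (⊤ : Submodule R M).FG) :
    Jgr (R := R) 𝒜 • (⊤ : Submodule R M) ≤ Jgr ℳ := by
  refine le_sInf fun B hB => ?_
  have hBh := (isGradedSub_iff_isHomogeneous 𝒜 ℳ).1 hB.1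
  have hsup : IsGradedSub ℳ (B ⊔ Jgr (R := R) 𝒜 • ⊤) := (isGradedSub_iff_isHomogeneous 𝒜 ℳ).2
    (hBh.sup ℳ ((isHomogeneous_Jgr 𝒜).smul 𝒜 ℳ fun _ _ _ => Submodule.mem_top))
  rcases hB.2.2 _ hsup le_sup_left with h | h
  · exact le_sup_right.trans h.le
  -- Otherwise Nakayama gives `t ≡ 1 mod J_gr(R)` with `t M ⊆ B`, but `t` lies in a graded maximal
  -- ideal containing `(B : M)`.
  exfalso
  obtain ⟨t, ht1, htB⟩ := Submodule.exists_sub_one_mem_and_smul_le_of_fg_of_le_sup hM le_rfl h.ge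
  obtain ⟨x, hx, hxB⟩ := Submodule.exists_isHomogeneousElem_notMem ℳ hB.2.1
  have hP : B.colon {x | IsHomogeneousElem ℳ x} ≠ ⊤ := fun h1 =>
    hxB (by simpa using Submodule.mem_colon.1 ((Ideal.eq_top_iff_one _).1 h1) x hx)
  obtain ⟨Q, hQ, hPQ⟩ := exists_le_isGrMaximal 𝒜 (hBh.colon 𝒜 ℳ fun _ h => h) hP
  have htQ : t ∈ Q := hPQ (Submodule.mem_colon.2 fun y _ =>
    htB (Submodule.smul_mem_pointwise_smul y t ⊤ Submodule.mem_top))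
  exact hQ.2.1 ((Ideal.eq_top_iff_one Q).2
    (by simpa using Q.sub_mem htQ (Submodule.mem_sInf.1 ht1 Q hQ)))

theorem mem_of_forall_smul_mem_smul_top (hM : (⊤ : Submodule R M).FG)
    (hmult : IsGrMultiplication 𝒜 ℳ) {L : Ideal R} (hL : L.IsHomogeneous 𝒜)
    (hann : (⊤ : Submodule R M).annihilator ≤ L) {a : R} (ha : IsHomogeneousElem 𝒜 a)
    (haL : ∀ x : M, a • x ∈ L • (⊤ : Submodule R M)) : a ∈ L := by
  -- Take a graded maximal `Q ⊇ (L : a)`. Nakayama gives `Q M ≠ M`, so some homogeneous `z ∉ Q M`;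
  -- writing `R z = J M`, we get `J ⊄ Q`, hence `q + j = 1`, while `j ^ 2 a ∈ L` puts `j ^ 2` in `Q`.
  by_contra haL'
  have hA : L.colon {a} ≠ ⊤ := fun h => haL' (by simpa using (Ideal.eq_top_iff_one _).1 h)
  obtain ⟨Q, hQ, hAQ⟩ := exists_le_isGrMaximal 𝒜 (hL.colon 𝒜 𝒜 (by simpa using ha)) hA
  have hLQ : L ≤ Q := fun c hc => hAQ (Submodule.mem_colon_singleton.2 (L.mul_mem_right a hc))
  obtain ⟨z, hz, hzQ⟩ := Submodule.exists_isHomogeneousElem_notMem ℳ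
    (smul_top_ne_top_of_annihilator_le hM (hann.trans hLQ) hQ.2.1)
  obtain ⟨J, hJ, hJz⟩ := hmult _ (isGradedSub_span_singleton_s16 𝒜 ℳ hz)
  have hJQ : ¬J ≤ Q := fun h =>
    hzQ (Submodule.smul_mono_left h (hJz ▸ Submodule.mem_span_singleton_self z))
  obtain ⟨q, hq, j, hj, hqj⟩ :=
    hQ.exists_add_eq_one 𝒜 ((isGradedSub_iff_isHomogeneous 𝒜 𝒜).1 hJ) hJQ
  have hjj : j * j ∈ Q := hAQ <| Submodule.mem_colon_singleton.2 <|
    mul_self_mul_mem_of_smul_le_span_singleton hann haL fun x =>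
      hJz ▸ Submodule.smul_mem_smul hj Submodule.mem_top
  have h1 : (1 : R) = q * (q + 2 * j) + j * j := by linear_combination -(q + j + 1) * hqj
  exact hQ.2.1 ((Ideal.eq_top_iff_one Q).2 (h1 ▸ Q.add_mem (Q.mul_mem_right _ hq) hjj))

theorem IsGrWJgrSemiprime.mul_mem_sup_Jgr {L : Ideal R} (hL : IsGrWJgrSemiprime 𝒜 𝒜 L)
    {r b : R} {n : ℕ} (hn : 0 < n) (hr : IsHomogeneousElem 𝒜 r) (hb : IsHomogeneousElem 𝒜 b)
    (h : r ^ n * b ∈ L) : r * b ∈ L ⊔ Jgr (R := R) 𝒜 := by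
  by_cases h0 : r ^ n * b = 0
  · refine Submodule.mem_sup_right (IsNilpotent.mem_Jgr 𝒜 ⟨n, ?_⟩ (hr.mul hb))
    obtain ⟨k, rfl⟩ := Nat.exists_eq_add_one_of_ne_zero hn.ne'
    rw [mul_pow, pow_succ' b, ← mul_assoc, h0, zero_mul]
  · exact hL.2.2 r b n hn hr hb h0 h

end Graded

variable {Γ : Type*} [AddGroup Γ] [DecidableEq Γ]
  {R : Type*} [CommRing R] (𝒜 : Γ → AddSubgroup R) [GradedRing 𝒜]
  {M : Type*} [AddCommGroup M] [Module R M]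
  (ℳ : Γ → AddSubgroup M) [SetLike.GradedSMul 𝒜 ℳ] [DirectSum.Decomposition ℳ]

theorem stmt16 (hfg : ∃ s : Finset M, (∀ m ∈ s, SetLike.IsHomogeneousElem ℳ m) ∧
      Submodule.span R (s : Set M) = ⊤)
    (hmult : ∀ V : Submodule R M, IsGradedSub ℳ V →
      ∃ K : Ideal R, IsGradedSub 𝒜 K ∧ V = K • (⊤ : Submodule R M))
    (L : Ideal R) (hL : IsGrWJgrSemiprime 𝒜 𝒜 L)
    (hann : (⊤ : Submodule R M).annihilator ≤ L) :
    IsGrWJgrSemiprime 𝒜 ℳ (L • (⊤ : Submodule R M)) := by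
  obtain ⟨s, -, hs⟩ := hfg
  have hM : (⊤ : Submodule R M).FG := ⟨s, hs⟩
  have hLh := (isGradedSub_iff_isHomogeneous 𝒜 𝒜).1 hL.1
  refine ⟨(isGradedSub_iff_isHomogeneous 𝒜 ℳ).2 (hLh.smul 𝒜 ℳ fun _ _ _ => Submodule.mem_top),
    smul_top_ne_top_of_annihilator_le hM hann hL.2.1, fun r m n hn hr hm _ hmem => ?_⟩
  obtain ⟨K, hK, hKm⟩ := hmult _ (isGradedSub_span_singleton_s16 𝒜 ℳ hm)
  have hKr : K ≤ (L ⊔ Jgr (R := R) 𝒜).colon {r} := by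
    rw [hK, Submodule.span_le]
    rintro b ⟨hbK, hb⟩
    rw [SetLike.mem_coe, Submodule.mem_colon_singleton, smul_eq_mul, mul_comm]
    have hrnb : IsHomogeneousElem 𝒜 (r ^ n * b) :=
      ((homogeneousSubmonoid 𝒜).pow_mem hr n).mul hb
    refine hL.mul_mem_sup_Jgr 𝒜 hn hr hb <|
      mem_of_forall_smul_mem_smul_top 𝒜 ℳ hM hmult hLh hann hrnb fun x => ?_
    obtain ⟨c, hc⟩ := Submodule.mem_span_singleton.1
      (hKm ▸ Submodule.smul_mem_smul hbK Submodule.mem_top : b • x ∈ R ∙ m)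
    rw [mul_smul, ← hc, smul_comm]
    exact Submodule.smul_mem _ c hmem
  have hrm := smul_mem_smul_top_of_le_colon (hKm ▸ Submodule.mem_span_singleton_self m) hKr
  rw [Submodule.sup_smul] at hrm
  exact sup_le_sup_left (Jgr_smul_top_le 𝒜 ℳ hM) _ hrm
end
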